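/- arXiv:1701.06384 — 7 statements merged into one kernel-verified Lean document; each statement's English description precedes it below -/
import Mathlib

section
/- Let M be a matroid flock on E, let α ∈ ℤ^E and let I ⊆ E. Then M_α/I = M_{α+e_I}\I, where e_I := Σ_{i∈I} e_i and N/I, N\I denote contraction and deletion of the set I. -/
open Matroid Set

namespace FrobFlock

variable {E : Type*}

/-- The local rank function of a matroid: the size of a largest independent subset of `X`. -/
noncomputable def rk (M : Matroid E) (X : Set E) : ℕ :=
  sSup {n | ∃ I, I ⊆ X ∧ M.Indep I ∧ I.ncard = n}

/-- Deletion of the set `D` from the matroid `M`. -/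
def mdel (M : Matroid E) (D : Set E) : Matroid E := M ↾ (M.E \ D)

/-- Contraction of the set `C` in the matroid `M` (defined by duality). -/
def mcon (M : Matroid E) (C : Set E) : Matroid E := (mdel M✶ C)✶

/-- The 0/1 indicator vector of a set `I ⊆ E`. -/
noncomputable def eVec (I : Set E) : E → ℤ := I.indicator 1

/-- `M : ℤ^E → Matroid E` is a matroid flock of rank `d` on `E`:
each `M α` is a matroid on ground set `E` of rank `d`, satisfying (MF1) and (MF2). -/
def IsMatroidFlock [Fintype E] (d : ℕ) (M : (E → ℤ) → Matroid E) : Prop :=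
  (∀ α, (M α).E = Set.univ) ∧
  (∀ α, rk (M α) Set.univ = d) ∧
  (∀ α (i : E), mcon (M α) {i} = mdel (M (α + eVec {i})) {i}) ∧
  (∀ α, M α = M (α + 1))

/-- A matroid valuation `ν : binom(E,d) → ℤ ∪ {∞}`, encoded as a function on all finsets
which takes the value `⊤` outside `binom(E,d)`. -/
def IsValuation [DecidableEq E] (d : ℕ) (ν : Finset E → WithTop ℤ) : Prop :=
  (∀ B : Finset E, B.card ≠ d → ν B = ⊤) ∧
  (∃ B : Finset E, B.card = d ∧ ν B ≠ ⊤) ∧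
  (∀ B B' : Finset E, B.card = d → B'.card = d → ∀ i ∈ B \ B', ∃ j ∈ B' \ B,
      ν (insert j (B.erase i)) + ν (insert i (B'.erase j)) ≤ ν B + ν B')

/-- `B ∈ B^ν_α`: the set `B` attains the supremum `g^ν(α)`, i.e. `B` is a basis of `M^ν_α`. -/
def OptBasis (d : ℕ) (ν : Finset E → WithTop ℤ) (α : E → ℤ) (B : Finset E) : Prop :=
  B.card = d ∧ ν B ≠ ⊤ ∧ ∀ B' : Finset E, B'.card = d →
    ((∑ i ∈ B', α i : ℤ) : WithTop ℤ) + ν B ≤ ((∑ i ∈ B, α i : ℤ) : WithTop ℤ) + ν B'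

lemma mdel_eq_delete (M : Matroid E) (D : Set E) : mdel M D = M ＼ D := rfl

lemma mcon_eq_contract (M : Matroid E) (C : Set E) : mcon M C = M ／ C := rfl

lemma eVec_empty : eVec (∅ : Set E) = 0 :=
  indicator_empty 1

lemma eVec_union {s t : Set E} (hst : Disjoint s t) : eVec (s ∪ t) = eVec s + eVec t :=
  indicator_union_of_disjoint hst 1

theorem contract_eq_delete_add_eVec {M : (E → ℤ) → Matroid E}
    (hM : ∀ α (i : E), M α ／ {i} = M (α + eVec {i}) ＼ {i})
    {I : Set E} (hI : I.Finite) (α : E → ℤ) :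
    M α ／ I = M (α + eVec I) ＼ I := by
  induction I, hI using Set.Finite.induction_on generalizing α with
  | empty => rw [contract_empty, eVec_empty, add_zero, delete_empty]
  | @insert i s his _ ih =>
    calc M α ／ insert i s
        = M α ／ {i} ／ s := by rw [contract_contract, singleton_union]
      _ = M (α + eVec {i}) ＼ {i} ／ s := by rw [hM]
      _ = M (α + eVec {i}) ／ s ＼ {i} :=
        (contract_delete_comm _ (disjoint_singleton_right.2 his)).symm
      _ = M (α + eVec (insert i s)) ＼ insert i s := by
        rw [ih, delete_delete, union_singleton, insert_eq, add_assoc,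
          eVec_union (disjoint_singleton_left.2 his)]

/-- **Lemma.** Let `M` be a matroid flock on `E`, let `α ∈ ℤ^E` and let `I ⊆ E`.
Then `M_α / I = M_{α+e_I} \ I`. -/
theorem flock_contract_eq_delete [Fintype E] (d : ℕ) (M : (E → ℤ) → Matroid E)
    (hM : IsMatroidFlock d M) (α : E → ℤ) (I : Set E) :
    mcon (M α) I = mdel (M (α + eVec I)) I := by
  rw [mcon_eq_contract, mdel_eq_delete]
  exact contract_eq_delete_add_eVec hM.2.2.1 I.toFinite α

end FrobFlock
end

section
/- Let M be a matroid flock on E, let α, β ∈ ℤ^E and let I ⊆ E. If I ∩ supp(β−α) = ∅ and α_i ≤ β_i for all i ∈ E, then r_α(I) ≥ r_β(I), where supp(γ) := {i ∈ E : γ_i ≠ 0} and r_γ denotes the rank function of M_γ. -/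
open Matroid Set

namespace FrobFlock

variable {E : Type*}

/-!
Raising a coordinate `i ∉ I` of `α` by one can only shrink the family of independent subsets
of `I`: by (MF1), `M_{α+e_i} \ i = M_α / i`, and independent sets of a contraction are
independent in the matroid itself. Walking from `α` to `β` by such unit steps gives the claim.
-/

theorem apply_le_of_add_single_le {ι γ : Type*} [Fintype ι] [DecidableEq ι] [Preorder γ]
    {S : Set ι} (f : (ι → ℤ) → γ) (hf : ∀ α, ∀ i ∉ S, f (α + Pi.single i 1) ≤ f α)
    {α β : ι → ℤ} (hle : α ≤ β) (hS : ∀ i ∈ S, α i = β i) : f β ≤ f α := by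
  induction hn : ∑ i, (β i - α i).toNat using Nat.strong_induction_on generalizing β with
  | _ n ih =>
  by_cases hβα : β = α
  · rw [hβα]
  obtain ⟨i, hi⟩ : ∃ i, α i < β i := by
    by_contra! h
    exact hβα (le_antisymm h hle)
  have hiS : i ∉ S := fun h => (hS i h ▸ hi).false
  set β' := β - Pi.single i 1
  have hβ' : ∀ j, β' j = β j - if j = i then 1 else 0 := fun j => by
    simp [β', Pi.single_apply]
  have hle' : α ≤ β' := fun j => show α j ≤ β' j by
    have hαβ : α j ≤ β j := hle j
    rw [hβ']
    split_ifs with hj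
    · subst hj
      omega
    · omega
  have hS' : ∀ j ∈ S, α j = β' j := fun j hj => by
    rw [hβ', if_neg (ne_of_mem_of_not_mem hj hiS), sub_zero, hS j hj]
  have hlt : ∑ j, (β' j - α j).toNat < ∑ j, (β j - α j).toNat := Finset.sum_lt_sum
    (fun j _ => by rw [hβ']; split_ifs <;> omega)
    ⟨i, Finset.mem_univ i, by rw [hβ', if_pos rfl]; omega⟩
  calc f β = f (β' + Pi.single i 1) := by rw [sub_add_cancel]
    _ ≤ f β' := hf β' i hiS
    _ ≤ f α := ih _ (hn ▸ hlt) hle' hS' rfl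

theorem rk_le_rk_of_indep_imp [Finite E] {N N' : Matroid E} {X : Set E}
    (h : ∀ J ⊆ X, N.Indep J → N'.Indep J) : rk N X ≤ rk N' X := by
  apply csSup_le_csSup
  · exact ⟨Nat.card E, fun n ⟨J, _, _, hJn⟩ => hJn ▸ Set.ncard_le_card J⟩
  · exact ⟨0, ∅, empty_subset X, N.empty_indep, ncard_empty E⟩
  · rintro n ⟨J, hJX, hJ, hJn⟩
    exact ⟨J, hJX, h J hJX hJ, hJn⟩

theorem IsMatroidFlock.indep_of_indep_add_single [Fintype E] [DecidableEq E] {d : ℕ}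
    {M : (E → ℤ) → Matroid E} (hM : IsMatroidFlock d M) (α : E → ℤ) {i : E} {J : Set E}
    (hJ : (M (α + Pi.single i 1)).Indep J) (hiJ : i ∉ J) : (M α).Indep J := by
  have hcon : mcon (M α) {i} = mdel (M (α + Pi.single i 1)) {i} := by
    rw [hM.2.2.1 α i, eVec, Set.indicator_singleton, Pi.one_apply]
  have hJcon : (mcon (M α) {i}).Indep J := by
    rw [hcon, mdel, restrict_indep_iff, hM.1]
    exact ⟨hJ, fun x hx => ⟨trivial, fun hxi => hiJ (hxi ▸ hx)⟩⟩
  exact Indep.of_contract hJcon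

theorem IsMatroidFlock.rk_add_single_le [Fintype E] [DecidableEq E] {d : ℕ}
    {M : (E → ℤ) → Matroid E} (hM : IsMatroidFlock d M) (α : E → ℤ) {i : E} {I : Set E}
    (hiI : i ∉ I) : rk (M (α + Pi.single i 1)) I ≤ rk (M α) I :=
  rk_le_rk_of_indep_imp fun _ hJI hJ =>
    hM.indep_of_indep_add_single α hJ fun hiJ => hiI (hJI hiJ)

/-- **Lemma.** Let `M` be a matroid flock on `E`, let `α, β ∈ ℤ^E` and let `I ⊆ E`.
If `I ∩ supp(β − α) = ∅` and `α ≤ β`, then `r_α(I) ≥ r_β(I)`. -/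
theorem flock_rank_antitone [Fintype E] (d : ℕ) (M : (E → ℤ) → Matroid E)
    (hM : IsMatroidFlock d M) (α β : E → ℤ) (I : Set E)
    (hsupp : I ∩ {i | β i - α i ≠ 0} = ∅) (hle : α ≤ β) :
    rk (M β) I ≤ rk (M α) I := by
  classical
  have hfix : ∀ i ∈ I, α i = β i := fun i hi => by
    by_contra h
    exact hsupp.subset ⟨hi, sub_ne_zero.2 (Ne.symm h)⟩
  exact apply_le_of_add_single_le (fun γ => rk (M γ) I)
    (fun γ _ hi => hM.rk_add_single_le γ hi) hle hfix

end FrobFlock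
end

section
/- Let M be a matroid flock on E. Then there is a unique function g : ℤ^E → ℤ such that (1) g(0) = 0, and (2) g(α + e_I) = g(α) + r_α(I) for all α ∈ ℤ^E and all I ⊆ E, where e_I := Σ_{i∈I} e_i and r_α is the rank function of M_α. -/
open Matroid Set

namespace FrobFlock

variable {E : Type*}

/-!
Walk from `β` through unit steps `e_{i₁}, e_{i₂}, …`, collecting at each step the rank of the
new element in the matroid of the current point (`pathRk`). By (MF1),
`r_α(insert i I) = r_α({i}) + r_{α+e_i}(I)` for `i ∉ I`, so two consecutive steps `i, j`
collect `r_β({i, j})` in either order; hence the total depends only on the multiset of steps,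
and a walk through the elements of `I` collects `r_β(I)`. Writing `α = c𝟙 + Σ_{i ∈ l} e_i`
for a list `l`, set `g(α) = c·d + pathRk l (c𝟙)`: this does not depend on the representation,
since a walk through all of `E` collects `r(E) = d`. Conversely any `g` with (1) and (2) has
`g(c𝟙) = c·d` and grows by `pathRk` along every walk, so it is this function.
-/

theorem _root_.Matroid.eRk_eq_eRk_add_eRk_contract (M : Matroid E) {C X : Set E} (hCX : C ⊆ X) :
    M.eRk X = M.eRk C + (M ／ C).eRk (X \ C) := by
  obtain ⟨J, hJ⟩ := M.exists_isBasis' C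
  obtain ⟨I, hI, hJI⟩ := hJ.indep.subset_isBasis'_of_subset (hJ.subset.trans hCX)
  have hIC : I ∩ C = J := (hJ.eq_of_subset_indep (hI.indep.subset inter_subset_left)
    (subset_inter hJI hJ.subset) inter_subset_right).symm
  have hcon : (M ／ C).IsBasis' (I \ C) (X \ C) :=
    hI.contract_isBasis' hJ (hI.indep.subset (union_subset sdiff_subset hJI))
  rw [hI.eRk_eq_encard, hJ.eRk_eq_encard, hcon.eRk_eq_encard, ← hIC, add_comm,
    encard_sdiff_add_encard_inter]

theorem cast_rk [Finite E] (M : Matroid E) (X : Set E) : (rk M X : ℕ∞) = M.eRk X := by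
  obtain ⟨I, hI⟩ := M.exists_isBasis' X
  have hmax : IsGreatest {n | ∃ J, J ⊆ X ∧ M.Indep J ∧ J.ncard = n} I.ncard := by
    refine ⟨⟨I, hI.subset, hI.indep, rfl⟩, ?_⟩
    rintro _ ⟨J, hJX, hJ, rfl⟩
    have := hJ.encard_le_eRk_of_subset hJX
    rw [hI.eRk_eq_encard, ← J.toFinite.cast_ncard_eq, ← I.toFinite.cast_ncard_eq] at this
    exact_mod_cast this
  rw [rk, hmax.csSup_eq, hI.eRk_eq_encard, I.toFinite.cast_ncard_eq]

theorem rk_empty [Finite E] (M : Matroid E) : rk M ∅ = 0 := by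
  have := cast_rk M ∅
  rw [eRk_empty] at this
  exact_mod_cast this

theorem rk_eq_rk_add_rk_contract [Finite E] {M : Matroid E} {C X : Set E} (hCX : C ⊆ X) :
    rk M X = rk M C + rk (M ／ C) (X \ C) := by
  have := M.eRk_eq_eRk_add_eRk_contract hCX
  rw [← cast_rk, ← cast_rk, ← cast_rk] at this
  exact_mod_cast this

theorem rk_delete [Finite E] {M : Matroid E} {D X : Set E} (hX : X ⊆ M.E \ D) :
    rk (M ＼ D) X = rk M X := by
  have := M.restrict_eRk_eq hX
  rw [← cast_rk, ← cast_rk] at this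
  exact_mod_cast this

section Flock

variable [Fintype E] {d : ℕ} {M : (E → ℤ) → Matroid E}

theorem IsMatroidFlock.rk_insert (hM : IsMatroidFlock d M) (α : E → ℤ) {i : E} {I : Set E}
    (hi : i ∉ I) : rk (M α) (insert i I) = rk (M α) {i} + rk (M (α + eVec {i})) I := by
  have hcon : M α ／ {i} = M (α + eVec {i}) ＼ {i} := hM.2.2.1 α i
  have hIE : I ⊆ (M (α + eVec {i})).E \ {i} := by
    rw [hM.1]
    exact subset_sdiff.2 ⟨subset_univ I, disjoint_singleton_right.2 hi⟩
  rw [rk_eq_rk_add_rk_contract (singleton_subset_iff.2 (mem_insert i I)), hcon,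
    insert_sdiff_self_of_notMem hi, rk_delete hIE]

theorem IsMatroidFlock.rk_singleton_add_comm (hM : IsMatroidFlock d M) (α : E → ℤ) (i j : E) :
    rk (M α) {i} + rk (M (α + eVec {i})) {j} = rk (M α) {j} + rk (M (α + eVec {j})) {i} := by
  obtain rfl | hij := eq_or_ne i j
  · rfl
  rw [← hM.rk_insert α (notMem_singleton_iff.2 hij),
    ← hM.rk_insert α (notMem_singleton_iff.2 hij.symm), pair_comm]

end Flock

theorem eVec_univ : eVec (univ : Set E) = 1 := indicator_univ 1

theorem eVec_insert {i : E} {I : Set E} (hi : i ∉ I) : eVec (insert i I) = eVec {i} + eVec I :=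
  indicator_union_of_disjoint (disjoint_singleton_left.2 hi) 1

noncomputable def listVec (l : List E) : E → ℤ := (l.map fun i => eVec {i}).sum

@[simp] theorem listVec_nil : listVec ([] : List E) = 0 := rfl

@[simp] theorem listVec_cons (i : E) (l : List E) : listVec (i :: l) = eVec {i} + listVec l := by
  simp [listVec]

theorem listVec_append (l l' : List E) : listVec (l ++ l') = listVec l + listVec l' := by
  simp [listVec]

theorem listVec_apply [DecidableEq E] (l : List E) (j : E) : listVec l j = l.count j := by
  induction l with
  | nil => simp
  | cons i l ih =>
    rw [listVec_cons, Pi.add_apply, ih, List.count_cons]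
    by_cases h : i = j <;> simp [eVec, h, add_comm]

theorem perm_of_listVec_eq {l l' : List E} (h : listVec l = listVec l') : l.Perm l' := by
  classical
  refine List.perm_iff_count.2 fun j => ?_
  have := congrFun h j
  rw [listVec_apply, listVec_apply] at this
  exact_mod_cast this

theorem listVec_perm {l l' : List E} (h : l.Perm l') : listVec l = listVec l' :=
  (h.map _).sum_eq

theorem listVec_toList (s : Finset E) : listVec s.toList = eVec s := by
  classical
  induction s using Finset.induction_on with
  | empty => ext; simp [eVec]
  | insert i s hi ih =>
    rw [listVec_perm (Finset.toList_insert hi), listVec_cons, ih, Finset.coe_insert,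
      eVec_insert (by exact_mod_cast hi)]

theorem exists_listVec_eq [Finite E] (v : E → ℕ) :
    ∃ l : List E, listVec l = fun j => (v j : ℤ) := by
  classical
  refine ⟨(Finsupp.toMultiset (Finsupp.equivFunOnFinite.symm v)).toList, funext fun j => ?_⟩
  rw [listVec_apply, ← Multiset.coe_count, Multiset.coe_toList, Finsupp.count_toMultiset]
  rfl

theorem exists_intCast_add_listVec [Finite E] (α : E → ℤ) :
    ∃ (c : ℤ) (l : List E), (c : E → ℤ) + listVec l = α := by
  obtain ⟨c, hc⟩ := (finite_range α).bddBelow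
  obtain ⟨l, hl⟩ := exists_listVec_eq fun j => (α j - c).toNat
  refine ⟨c, l, funext fun j => ?_⟩
  have := hc (mem_range_self j)
  simp only [Pi.add_apply, Pi.intCast_apply, Int.cast_id, hl]
  omega

theorem apply_intCast_eq_mul {G : Type*} [AddGroupWithOne G] {f : G → ℤ} {d : ℤ}
    (hf0 : f 0 = 0) (hf : ∀ x, f (x + 1) = f x + d) (c : ℤ) : f c = c * d := by
  induction c using Int.induction_on with
  | zero => simp [hf0]
  | succ c ih => rw [Int.cast_add, Int.cast_one, hf, ih]; ring
  | pred c ih =>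
    have := hf ((-c - 1 : ℤ) : G)
    rw [show ((-c - 1 : ℤ) : G) + 1 = ((-c : ℤ) : G) by simp, ih] at this
    linarith

noncomputable def pathRk (M : (E → ℤ) → Matroid E) : List E → (E → ℤ) → ℤ
  | [], _ => 0
  | i :: l, β => rk (M β) {i} + pathRk M l (β + eVec {i})

section Path

variable {M : (E → ℤ) → Matroid E}

theorem pathRk_append (l l' : List E) (β : E → ℤ) :
    pathRk M (l ++ l') β = pathRk M l β + pathRk M l' (β + listVec l) := by
  induction l generalizing β with
  | nil => simp [pathRk]
  | cons i l ih => simp [pathRk, ih, add_assoc]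

theorem apply_add_listVec {f : (E → ℤ) → ℤ}
    (hf : ∀ β i, f (β + eVec {i}) = f β + rk (M β) {i}) (l : List E) (β : E → ℤ) :
    f (β + listVec l) = f β + pathRk M l β := by
  induction l generalizing β with
  | nil => simp [pathRk]
  | cons i l ih => rw [listVec_cons, ← add_assoc, ih, hf, pathRk, add_assoc]

variable [Fintype E] {d : ℕ}

theorem IsMatroidFlock.pathRk_perm (hM : IsMatroidFlock d M) {l l' : List E} (h : l.Perm l') :
    pathRk M l = pathRk M l' := by
  induction h with
  | nil => rfl
  | cons i _ ih => funext β; simp only [pathRk, ih]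
  | swap i j l =>
    funext β
    simp only [pathRk, add_right_comm β]
    linarith [hM.rk_singleton_add_comm β i j]
  | trans _ _ ih ih' => exact ih.trans ih'

theorem IsMatroidFlock.pathRk_toList (hM : IsMatroidFlock d M) (s : Finset E) (β : E → ℤ) :
    pathRk M s.toList β = rk (M β) s := by
  classical
  induction s using Finset.induction_on generalizing β with
  | empty => simp [pathRk, rk_empty]
  | insert i s hi ih =>
    rw [hM.pathRk_perm (Finset.toList_insert hi), pathRk, ih, Finset.coe_insert,
      hM.rk_insert β (by exact_mod_cast hi), Nat.cast_add]

theorem IsMatroidFlock.pathRk_univ_append (hM : IsMatroidFlock d M) (c : ℤ) (l : List E) :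
    pathRk M ((Finset.univ : Finset E).toList ++ l) c = d + pathRk M l (c + 1 : ℤ) := by
  rw [pathRk_append, hM.pathRk_toList, listVec_toList, Finset.coe_univ, eVec_univ, hM.2.1,
    Int.cast_add, Int.cast_one]

theorem IsMatroidFlock.mul_add_pathRk_eq (hM : IsMatroidFlock d M) {c c' : ℤ} {l l' : List E}
    (h : (c : E → ℤ) + listVec l = (c' : E → ℤ) + listVec l') :
    c * d + pathRk M l c = c' * d + pathRk M l' c' := by
  wlog hcc' : c' ≤ c generalizing c c' l l'
  · exact (this h.symm (le_of_not_ge hcc')).symm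
  obtain ⟨n, rfl⟩ := Int.le.dest hcc'
  induction n generalizing l with
  | zero =>
    simp only [Nat.cast_zero, add_zero, add_right_inj] at h ⊢
    rw [hM.pathRk_perm (perm_of_listVec_eq h)]
  | succ n ih =>
    have h' : ((c' + n : ℤ) : E → ℤ) + listVec ((Finset.univ : Finset E).toList ++ l) =
        (c' : E → ℤ) + listVec l' := by
      rw [← h, listVec_append, listVec_toList, Finset.coe_univ, eVec_univ]
      push_cast; abel
    rw [← ih h' (by omega), hM.pathRk_univ_append, Nat.cast_succ, ← add_assoc]
    ring

end Path

noncomputable def flockPotential [Finite E] (M : (E → ℤ) → Matroid E) (d : ℕ)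
    (α : E → ℤ) : ℤ :=
  let c := (exists_intCast_add_listVec α).choose
  c * d + pathRk M (exists_intCast_add_listVec α).choose_spec.choose c

section Potential

variable [Fintype E] {d : ℕ} {M : (E → ℤ) → Matroid E}

theorem IsMatroidFlock.flockPotential_eq (hM : IsMatroidFlock d M) {c : ℤ} {l : List E}
    {α : E → ℤ} (h : (c : E → ℤ) + listVec l = α) :
    flockPotential M d α = c * d + pathRk M l c :=
  hM.mul_add_pathRk_eq ((exists_intCast_add_listVec α).choose_spec.choose_spec.trans h.symm)

theorem IsMatroidFlock.flockPotential_zero (hM : IsMatroidFlock d M) :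
    flockPotential M d 0 = 0 := by
  simpa [pathRk] using hM.flockPotential_eq (c := 0) (l := []) (by simp)

theorem IsMatroidFlock.flockPotential_add_eVec (hM : IsMatroidFlock d M) (α : E → ℤ)
    (I : Set E) : flockPotential M d (α + eVec I) = flockPotential M d α + rk (M α) I := by
  classical
  obtain ⟨c, l, rfl⟩ := exists_intCast_add_listVec α
  have h : (c : E → ℤ) + listVec (l ++ I.toFinset.toList) = c + listVec l + eVec I := by
    rw [listVec_append, listVec_toList, coe_toFinset, add_assoc]
  rw [hM.flockPotential_eq h, hM.flockPotential_eq rfl, pathRk_append, hM.pathRk_toList,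
    coe_toFinset, add_assoc]

theorem IsMatroidFlock.eq_flockPotential (hM : IsMatroidFlock d M) {f : (E → ℤ) → ℤ}
    (hf0 : f 0 = 0) (hf : ∀ α I, f (α + eVec I) = f α + rk (M α) I) :
    f = flockPotential M d := by
  funext α
  obtain ⟨c, l, rfl⟩ := exists_intCast_add_listVec α
  have hf1 (β : E → ℤ) : f (β + 1) = f β + d := by rw [← eVec_univ, hf, hM.2.1]
  rw [hM.flockPotential_eq rfl, apply_add_listVec (fun β i => hf β {i}),
    apply_intCast_eq_mul hf0 hf1]

end Potential

/-- **Lemma.** Let `M` be a matroid flock on `E`.  There is a unique function `g : ℤ^E → ℤ`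
such that (1) `g(0) = 0`, and (2) `g(α + e_I) = g(α) + r_α(I)` for all `α ∈ ℤ^E` and
`I ⊆ E`. -/
theorem flock_exists_unique_g [Fintype E] (d : ℕ) (M : (E → ℤ) → Matroid E)
    (hM : IsMatroidFlock d M) :
    ∃! g : (E → ℤ) → ℤ, g 0 = 0 ∧
      ∀ (α : E → ℤ) (I : Set E), g (α + eVec I) = g α + rk (M α) I :=
  ⟨flockPotential M d, ⟨hM.flockPotential_zero, hM.flockPotential_add_eVec⟩,
    fun _ ⟨hf0, hf⟩ => hM.eq_flockPotential hf0 hf⟩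

end FrobFlock
end

section
/- Let M be a matroid flock of rank d on E and let g = g^M. Then (1) g(α) + g(β) ≥ g(α ∨ β) + g(α ∧ β) for all α, β ∈ ℤ^E, where ∨ and ∧ denote componentwise maximum and minimum; and (2) g(α + 𝟙) = g(α) + d for all α ∈ ℤ^E. (In particular g^M is an L-convex function.) -/
open Matroid Set

namespace FrobFlock

variable {E : Type*}

section Aux

variable [Fintype E]

lemma bddAbove_rkSet (M : Matroid E) (X : Set E) :
    BddAbove {n | ∃ I, I ⊆ X ∧ M.Indep I ∧ I.ncard = n} := by
  refine ⟨Fintype.card E, ?_⟩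
  rintro n ⟨I, -, -, rfl⟩
  calc I.ncard ≤ (Set.univ : Set E).ncard :=
        Set.ncard_le_ncard (Set.subset_univ I) (Set.toFinite _)
    _ = Fintype.card E := by simp [Set.ncard_univ]

lemma le_rk {M : Matroid E} {X I : Set E} (hIX : I ⊆ X) (hI : M.Indep I) :
    I.ncard ≤ rk M X :=
  le_csSup (bddAbove_rkSet M X) ⟨I, hIX, hI, rfl⟩

lemma exists_rk_attain (M : Matroid E) (X : Set E) :
    ∃ I, I ⊆ X ∧ M.Indep I ∧ I.ncard = rk M X := by
  have h0 : (0 : ℕ) ∈ {n | ∃ I, I ⊆ X ∧ M.Indep I ∧ I.ncard = n} :=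
    ⟨∅, Set.empty_subset _, M.empty_indep, by simp⟩
  exact Nat.sSup_mem ⟨0, h0⟩ (bddAbove_rkSet M X)

lemma rk_union_le (M : Matroid E) (X Y : Set E) :
    rk M (X ∪ Y) ≤ rk M X + rk M Y := by
  obtain ⟨I, hIXY, hI, hcard⟩ := exists_rk_attain M (X ∪ Y)
  rw [← hcard]
  have h1 : (I ∩ X).ncard ≤ rk M X := le_rk Set.inter_subset_right (hI.subset Set.inter_subset_left)
  have h2 : (I ∩ Y).ncard ≤ rk M Y := le_rk Set.inter_subset_right (hI.subset Set.inter_subset_left)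
  have hsub : I ⊆ (I ∩ X) ∪ (I ∩ Y) := by
    intro x hx
    rcases hIXY hx with h | h
    · exact Or.inl ⟨hx, h⟩
    · exact Or.inr ⟨hx, h⟩
  calc I.ncard ≤ ((I ∩ X) ∪ (I ∩ Y)).ncard := Set.ncard_le_ncard hsub (Set.toFinite _)
    _ ≤ (I ∩ X).ncard + (I ∩ Y).ncard := Set.ncard_union_le _ _
    _ ≤ rk M X + rk M Y := add_le_add h1 h2

lemma eVec_self (j : E) : eVec ({j} : Set E) j = 1 := by simp [eVec]

lemma eVec_ne {j k : E} (h : k ≠ j) : eVec ({j} : Set E) k = 0 := by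
  simp [eVec, Set.indicator_apply, h]

lemma sum_eVec_singleton (j : E) : (∑ k, eVec ({j} : Set E) k) = 1 := by
  rw [Finset.sum_eq_single j]
  · exact eVec_self j
  · intro k _ hk; exact eVec_ne hk
  · intro h; exact absurd (Finset.mem_univ j) h

lemma g_local {M : (E → ℤ) → Matroid E} {g : (E → ℤ) → ℤ}
    (hg : ∀ (α : E → ℤ) (I : Set E), g (α + eVec I) = g α + rk (M α) I)
    {i j : E} (hij : i ≠ j) (γ : E → ℤ) :
    g γ + g (γ + eVec {i} + eVec {j}) ≤ g (γ + eVec {i}) + g (γ + eVec {j}) := by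
  have hunion : eVec (({i} : Set E) ∪ {j}) = eVec {i} + eVec {j} := by
    unfold eVec
    exact Set.indicator_union_of_disjoint (by simpa using hij) 1
  have h1 := hg γ {i}
  have h2 := hg γ {j}
  have h12 := hg γ ({i} ∪ {j})
  rw [hunion, ← add_assoc] at h12
  have hsub : (rk (M γ) (({i} : Set E) ∪ {j}) : ℤ) ≤ rk (M γ) {i} + rk (M γ) {j} := by
    exact_mod_cast rk_union_le (M γ) {i} {j}
  linarith

lemma g_step {M : (E → ℤ) → Matroid E} {g : (E → ℤ) → ℤ}
    (hg : ∀ (α : E → ℤ) (I : Set E), g (α + eVec I) = g α + rk (M α) I) :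
    ∀ (n : ℕ) (x v : E → ℤ) (i : E), 0 ≤ v → v i = 0 → (∑ j, v j).toNat = n →
      g (x + v + eVec {i}) + g x ≤ g (x + v) + g (x + eVec {i}) := by
  intro n
  induction n using Nat.strong_induction_on with
  | _ n IH =>
    intro x v i hv hvi hn
    by_cases hv0 : v = 0
    · subst hv0; simp only [add_zero]; linarith
    · obtain ⟨j, hj⟩ : ∃ j, 0 < v j := by
        by_contra h
        push_neg at h
        exact hv0 (funext fun j => le_antisymm (h j) (hv j))
      have hij : i ≠ j := by rintro rfl; rw [hvi] at hj; exact lt_irrefl _ hj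
      set v' := v - eVec {j} with hv'def
      have hkey : v' + eVec {j} = v := by simp [hv'def]
      have hv'nonneg : (0 : E → ℤ) ≤ v' := by
        intro k
        simp only [hv'def, Pi.sub_apply, Pi.zero_apply]
        by_cases hk : k = j
        · subst hk; rw [eVec_self]; omega
        · rw [eVec_ne hk, sub_zero]; exact hv k
      have hv'i : v' i = 0 := by
        simp only [hv'def, Pi.sub_apply, eVec_ne hij, hvi, sub_zero]
      have hvj1 : (1 : ℤ) ≤ ∑ k, v k := by
        have := Finset.single_le_sum (f := v) (fun k _ => hv k) (Finset.mem_univ j)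
        omega
      have hsum' : (∑ k, v' k) = (∑ k, v k) - 1 := by
        simp only [hv'def, Pi.sub_apply, Finset.sum_sub_distrib, sum_eVec_singleton]
      have hlt : (∑ k, v' k).toNat < n := by omega
      have hloc := g_local hg hij (x + v')
      have e1 : x + v' + eVec {i} + eVec {j} = x + v + eVec {i} := by rw [← hkey]; ring
      have e2 : x + v' + eVec {j} = x + v := by rw [← hkey]; ring
      rw [e1, e2] at hloc
      have hIH := IH _ hlt x v' i hv'nonneg hv'i rfl
      linarith

lemma g_submod_aux {M : (E → ℤ) → Matroid E} {g : (E → ℤ) → ℤ}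
    (hg : ∀ (α : E → ℤ) (I : Set E), g (α + eVec I) = g α + rk (M α) I) :
    ∀ (n : ℕ) (x a b : E → ℤ), 0 ≤ a → 0 ≤ b → (∀ i, a i = 0 ∨ b i = 0) →
      (∑ j, a j).toNat = n →
      g (x + a + b) + g x ≤ g (x + a) + g (x + b) := by
  intro n
  induction n using Nat.strong_induction_on with
  | _ n IH =>
    intro x a b ha hb hdisj hn
    by_cases ha0 : a = 0
    · subst ha0; simp only [add_zero]; linarith
    · obtain ⟨i, hi⟩ : ∃ i, 0 < a i := by
        by_contra h
        push_neg at h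
        exact ha0 (funext fun i => le_antisymm (h i) (ha i))
      have hbi : b i = 0 := by
        rcases hdisj i with h | h
        · omega
        · exact h
      set a' := a - eVec {i} with ha'def
      have hkey : a' + eVec {i} = a := by simp [ha'def]
      have ha'nonneg : (0 : E → ℤ) ≤ a' := by
        intro k
        simp only [ha'def, Pi.sub_apply, Pi.zero_apply]
        by_cases hk : k = i
        · subst hk; rw [eVec_self]; omega
        · rw [eVec_ne hk, sub_zero]; exact ha k
      have hdisj' : ∀ k, a' k = 0 ∨ b k = 0 := by
        intro k
        by_cases hk : k = i
        · subst hk; exact Or.inr hbi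
        · rcases hdisj k with h | h
          · left; simp only [ha'def, Pi.sub_apply, eVec_ne hk, h, sub_zero]
          · exact Or.inr h
      have hai1 : (1 : ℤ) ≤ ∑ k, a k := by
        have := Finset.single_le_sum (f := a) (fun k _ => ha k) (Finset.mem_univ i)
        omega
      have hsum' : (∑ k, a' k) = (∑ k, a k) - 1 := by
        simp only [ha'def, Pi.sub_apply, Finset.sum_sub_distrib, sum_eVec_singleton]
      have hlt : (∑ k, a' k).toNat < n := by omega
      have hstep := g_step hg ((∑ k, b k).toNat) (x + a') b i hb hbi rfl
      have e1 : x + a' + b + eVec {i} = x + a + b := by rw [← hkey]; ring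
      have e2 : x + a' + eVec {i} = x + a := by rw [← hkey]; ring
      rw [e1, e2] at hstep
      have hIH := IH _ hlt x a' b ha'nonneg hb hdisj' rfl
      linarith

end Aux

/-- **Theorem.** Let `M` be a matroid flock of rank `d` on `E` and let `g = g^M` (i.e. `g`
satisfies `g(0) = 0` and `g(α+e_I) = g(α) + r_α(I)`).  Then (1) `g` is submodular:
`g(α) + g(β) ≥ g(α ∨ β) + g(α ∧ β)` for all `α, β ∈ ℤ^E`; and (2) `g(α + 𝟙) = g(α) + d`
for all `α ∈ ℤ^E`.  (In particular `g^M` is L-convex.) -/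
theorem flock_g_Lconvex [Fintype E] (d : ℕ) (M : (E → ℤ) → Matroid E)
    (hM : IsMatroidFlock d M) (g : (E → ℤ) → ℤ) (hg0 : g 0 = 0)
    (hg : ∀ (α : E → ℤ) (I : Set E), g (α + eVec I) = g α + rk (M α) I) :
    (∀ α β : E → ℤ, g (α ⊔ β) + g (α ⊓ β) ≤ g α + g β) ∧
    (∀ α : E → ℤ, g (α + 1) = g α + d) := by
  constructor
  · intro α β
    set x := α ⊓ β with hx
    set a := α - x with hadef
    set b := β - x with hbdef
    have ha : (0 : E → ℤ) ≤ a := by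
      intro i
      simp only [hadef, hx, Pi.sub_apply, Pi.inf_apply, Pi.zero_apply]
      exact sub_nonneg.2 inf_le_left
    have hb : (0 : E → ℤ) ≤ b := by
      intro i
      simp only [hbdef, hx, Pi.sub_apply, Pi.inf_apply, Pi.zero_apply]
      exact sub_nonneg.2 inf_le_right
    have hdisj : ∀ i, a i = 0 ∨ b i = 0 := by
      intro i
      rcases le_total (α i) (β i) with h | h
      · left
        simp [hadef, hx, Pi.inf_apply, inf_eq_left.mpr h]
      · right
        simp [hbdef, hx, Pi.inf_apply, inf_eq_right.mpr h]
    have e1 : x + a = α := by simp [hadef]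
    have e2 : x + b = β := by simp [hbdef]
    have e3 : x + a + b = α ⊔ β := by
      funext i
      simp only [hadef, hbdef, hx, Pi.add_apply, Pi.sub_apply, Pi.inf_apply, Pi.sup_apply]
      rcases le_total (α i) (β i) with h | h
      · rw [sup_eq_right.mpr h, inf_eq_left.mpr h]; ring
      · rw [sup_eq_left.mpr h, inf_eq_right.mpr h]; ring
    have := g_submod_aux hg ((∑ j, a j).toNat) x a b ha hb hdisj rfl
    rw [e3, e1, e2] at this
    linarith
  · intro α
    have h1 : (1 : E → ℤ) = eVec Set.univ := by
      funext i
      simp [eVec]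
    rw [h1, hg α Set.univ, hM.2.1 α]

end FrobFlock
end

section
/- Let ν : binom(E,d) → ℤ ∪ {∞} be a matroid valuation, and let β ∈ ℝ^E. Define C^ν_β := { α ∈ ℝ^E : B^ν_α ⊇ B^ν_β }. Then C^ν_β = { α ∈ ℝ^E : α_i − α_j ≥ ν(B) − ν(B') for all B ∈ B^ν_β and all B' ∈ binom(E,d) with ν(B') < ∞ such that B' = B − i + j }. -/
open Matroid Set

namespace FrobFlock

variable {E : Type*}

/-- The Legendre–Fenchel dual `g^•(ω) = sup { ωᵀy − g(y) : y ∈ ℤ^E }`, with values in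
the extended reals (it is `⊤` when the supremum is infinite, and an integer otherwise). -/
noncomputable def fenchel [Fintype E] (g : (E → ℤ) → ℤ) (ω : E → ℤ) : EReal :=
  ⨆ y : E → ℤ, (((∑ i, ω i * y i : ℤ) : ℝ) : EReal) - ((g y : ℝ) : EReal)

/-- Interpret an element of `ℤ ∪ {∞}` as an extended real number. -/
noncomputable def toER : WithTop ℤ → EReal :=
  fun x => WithTop.recTopCoe ⊤ (fun z : ℤ => ((z : ℝ) : EReal)) x

/-- `B ∈ B^ν_α` for a real vector `α ∈ ℝ^E`: the set `B` attains the supremum `g^ν(α)`. -/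
def OptBasisR (d : ℕ) (ν : Finset E → WithTop ℤ) (α : E → ℝ) (B : Finset E) : Prop :=
  B.card = d ∧ ν B ≠ ⊤ ∧ ∀ B' : Finset E, B'.card = d →
    ((∑ i ∈ B', α i : ℝ) : EReal) + toER (ν B) ≤ ((∑ i ∈ B, α i : ℝ) : EReal) + toER (ν B')

lemma toER_coe (z : ℤ) : toER (z : WithTop ℤ) = ((z : ℝ) : EReal) := rfl

lemma sum_exchange [DecidableEq E] (α : E → ℝ) {B : Finset E} {i j : E}
    (hi : i ∈ B) (hj : j ∉ B) :
    ∑ k ∈ insert j (B.erase i), α k = ∑ k ∈ B, α k - α i + α j := by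
  rw [Finset.sum_insert (by simp [Finset.mem_erase, hj]),
    Finset.sum_erase_eq_sub hi]
  ring

lemma ereal_add_le (a b : ℝ) (z w : ℤ) :
    ((a : EReal) + ((z : ℝ) : EReal) ≤ (b : EReal) + ((w : ℝ) : EReal)) ↔
      a + (z : ℝ) ≤ b + (w : ℝ) := by
  rw [← EReal.coe_add, ← EReal.coe_add, EReal.coe_le_coe_iff]

/-- **Lemma (cells are alcoved polytopes).** Let `ν : binom(E,d) → ℤ ∪ {∞}` be a matroid
valuation and let `β ∈ ℝ^E`.  Then the cell `C^ν_β = {α ∈ ℝ^E : B^ν_α ⊇ B^ν_β}` equals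
`{α ∈ ℝ^E : α_i − α_j ≥ ν(B) − ν(B') for all B ∈ B^ν_β and B' ∈ B^ν with B' = B − i + j}`. -/
theorem valuation_cell_alcoved [Fintype E] [DecidableEq E] (d : ℕ)
    (ν : Finset E → WithTop ℤ) (hν : IsValuation d ν) (β : E → ℝ) :
    {α : E → ℝ | ∀ B : Finset E, OptBasisR d ν β B → OptBasisR d ν α B} =
    {α : E → ℝ | ∀ B : Finset E, OptBasisR d ν β B →
      ∀ B' : Finset E, B'.card = d → ν B' ≠ ⊤ →
        ∀ i ∈ B, ∀ j, j ∉ B → B' = insert j (B.erase i) →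
          toER (ν B) - toER (ν B') ≤ ((α i - α j : ℝ) : EReal)} := by
  ext α
  simp only [Set.mem_setOf_eq]
  constructor
  · -- easy direction
    intro h B hB B' hB'card hB'top i hi j hj hB'eq
    subst hB'eq
    obtain ⟨hBcard, hBtop, hopt⟩ := h B hB
    obtain ⟨b, hb⟩ := WithTop.ne_top_iff_exists.mp hBtop
    obtain ⟨b', hb'⟩ := WithTop.ne_top_iff_exists.mp hB'top
    have hopt' := hopt _ hB'card
    rw [sum_exchange α hi hj, ← hb, ← hb', toER_coe, toER_coe,
      ereal_add_le] at hopt'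
    rw [← hb, ← hb', toER_coe, toER_coe, ← EReal.coe_sub, EReal.coe_le_coe_iff]
    linarith
  · -- hard direction: local optimality implies global optimality
    intro h B hB
    obtain ⟨hBcard, hBtop, -⟩ := id hB
    obtain ⟨b, hb⟩ := WithTop.ne_top_iff_exists.mp hBtop
    have key : ∀ n, ∀ B'' : Finset E, B''.card = d → ∀ b'' : ℤ, ν B'' = (b'' : WithTop ℤ) →
        (B'' \ B).card = n →
        ∑ k ∈ B'', α k + (b : ℝ) ≤ ∑ k ∈ B, α k + (b'' : ℝ) := by
      intro n
      induction n with
      | zero =>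
        intro B'' hB''card b'' hb'' hcard
        have hsub : B'' ⊆ B := by
          rwa [Finset.card_eq_zero, Finset.sdiff_eq_empty_iff_subset] at hcard
        have : B'' = B := Finset.eq_of_subset_of_card_le hsub (by omega)
        subst this
        have : b = b'' := by rw [← hb] at hb''; exact_mod_cast hb''
        simp [this]
      | succ n ih =>
        intro B'' hB''card b'' hb'' hcard
        have hcomm : (B \ B'').card = n + 1 := by
          rw [Finset.card_sdiff_comm (hBcard.trans hB''card.symm)]; exact hcard
        have hne : (B \ B'').Nonempty := Finset.card_pos.mp (by omega)
        obtain ⟨i, hiBd⟩ := hne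
        have hiB : i ∈ B := (Finset.mem_sdiff.mp hiBd).1
        have hiB'' : i ∉ B'' := (Finset.mem_sdiff.mp hiBd).2
        obtain ⟨j, hjmem, hV⟩ := hν.2.2 B B'' hBcard hB''card i hiBd
        have hjB'' : j ∈ B'' := (Finset.mem_sdiff.mp hjmem).1
        have hjB : j ∉ B := (Finset.mem_sdiff.mp hjmem).2
        set B1 := insert j (B.erase i) with hB1
        set B2 := insert i (B''.erase j) with hB2
        rw [← hb, hb'', ← WithTop.coe_add] at hV
        have h1top : ν B1 ≠ ⊤ := by
          intro hx; rw [hx] at hV; simp at hV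
        have h2top : ν B2 ≠ ⊤ := by
          intro hx; rw [hx, add_top] at hV; simp at hV
        obtain ⟨b1, hb1⟩ := WithTop.ne_top_iff_exists.mp h1top
        obtain ⟨b2, hb2⟩ := WithTop.ne_top_iff_exists.mp h2top
        rw [← hb1, ← hb2, ← WithTop.coe_add, WithTop.coe_le_coe] at hV
        have hd1 : 1 ≤ d := by
          have := Finset.card_ne_zero_of_mem hiB; omega
        have hB1card : B1.card = d := by
          rw [hB1, Finset.card_insert_of_notMem (by simp [Finset.mem_erase, hjB]),
            Finset.card_erase_of_mem hiB, hBcard]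
          omega
        have hB2card : B2.card = d := by
          rw [hB2, Finset.card_insert_of_notMem
              (fun hx => hiB'' (Finset.mem_of_mem_erase hx)),
            Finset.card_erase_of_mem hjB'', hB''card]
          omega
        -- the alcoved inequality at B1
        have hloc := h B hB B1 hB1card h1top i hiB j hjB rfl
        rw [← hb, ← hb1, toER_coe, toER_coe, ← EReal.coe_sub,
          EReal.coe_le_coe_iff] at hloc
        -- inductive step via B2
        have hB2sd : B2 \ B = (B'' \ B).erase j := by
          ext k
          simp only [hB2, Finset.mem_sdiff, Finset.mem_insert, Finset.mem_erase]
          constructor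
          · rintro ⟨hk1 | ⟨hk2, hk3⟩, hk4⟩
            · exact absurd (hk1 ▸ hiB) hk4
            · exact ⟨hk2, hk3, hk4⟩
          · rintro ⟨hk1, hk2, hk3⟩
            exact ⟨Or.inr ⟨hk1, hk2⟩, hk3⟩
        have hB2card' : (B2 \ B).card = n := by
          rw [hB2sd, Finset.card_erase_of_mem hjmem, hcard]
          omega
        have hIH := ih B2 hB2card b2 hb2.symm hB2card'
        have hsum2 : ∑ k ∈ B2, α k = ∑ k ∈ B'', α k - α j + α i :=
          sum_exchange α hjB'' hiB''
        have hVr : (b1 : ℝ) + (b2 : ℝ) ≤ (b : ℝ) + (b'' : ℝ) := by exact_mod_cast hV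
        rw [hsum2] at hIH
        linarith
    refine ⟨hBcard, hBtop, ?_⟩
    intro B' hB'card
    by_cases hB'top : ν B' = ⊤
    · rw [hB'top]
      have : toER (⊤ : WithTop ℤ) = ⊤ := rfl
      rw [this]
      rw [EReal.add_top_of_ne_bot (EReal.coe_ne_bot _)]
      exact le_top
    · obtain ⟨b', hb'⟩ := WithTop.ne_top_iff_exists.mp hB'top
      rw [← hb, ← hb', toER_coe, toER_coe, ereal_add_le]
      exact key (B' \ B).card B' hB'card b' hb'.symm rfl

end FrobFlock
end

section
/- (Dress–Wenzel) Let ν be a matroid valuation with support matroid M = (E, 𝔅) of rank d. Let F ⊆ E and let a, b, c, d' ∈ E \ F be four distinct elements. If F+a+c, F+b+d', F+a+d', and F+b+c all belong to 𝔅, but F+a+b ∉ 𝔅, then ν(F+a+c) + ν(F+b+d') = ν(F+a+d') + ν(F+b+c). -/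
open Matroid Set

namespace FrobFlock

variable {E : Type*}

/-- A matroid valuation `ν : binom(E,d) → ℝ ∪ {∞}`, encoded as a function on all finsets
which takes the value `⊤` outside `binom(E,d)`: (V1) some `B ∈ binom(E,d)` has `ν(B) < ∞`,
and (V2) the exchange property holds. -/
def IsValuationR [DecidableEq E] (d : ℕ) (ν : Finset E → WithTop ℝ) : Prop :=
  (∀ B : Finset E, B.card ≠ d → ν B = ⊤) ∧
  (∃ B : Finset E, B.card = d ∧ ν B ≠ ⊤) ∧
  (∀ B B' : Finset E, B.card = d → B'.card = d → ∀ i ∈ B \ B', ∃ j ∈ B' \ B,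
      ν (insert j (B.erase i)) + ν (insert i (B'.erase j)) ≤ ν B + ν B')

private lemma card_ins [DecidableEq E] {F : Finset E} {a c : E} (hac : a ≠ c)
    (haF : a ∉ F) (hcF : c ∉ F) {d : ℕ} (hcard : F.card + 2 = d) :
    (insert a (insert c F)).card = d := by
  rw [Finset.card_insert_of_notMem (by simp [hac, haF]),
    Finset.card_insert_of_notMem hcF]
  omega

private lemma key [DecidableEq E] {d : ℕ} {ν : Finset E → WithTop ℝ}
    (hν : IsValuationR d ν)
    {F : Finset E} {a b c d' : E}
    (hab : a ≠ b) (hac : a ≠ c) (had : a ≠ d') (hbc : b ≠ c) (hbd : b ≠ d') (hcd : c ≠ d')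
    (haF : a ∉ F) (hbF : b ∉ F) (hcF : c ∉ F) (hdF : d' ∉ F)
    (hcard : F.card + 2 = d)
    (h₁ : ν (insert a (insert c F)) ≠ ⊤)
    (h₂ : ν (insert b (insert d' F)) ≠ ⊤)
    (h₅ : ν (insert a (insert b F)) = ⊤) :
    ν (insert b (insert c F)) + ν (insert a (insert d' F)) ≤
      ν (insert a (insert c F)) + ν (insert b (insert d' F)) := by
  obtain ⟨-, -, hV2⟩ := hν
  have hB := card_ins hac haF hcF hcard
  have hB' := card_ins hbd hbF hdF hcard
  have hi : a ∈ insert a (insert c F) \ insert b (insert d' F) := by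
    simp [hab, had, haF]
  obtain ⟨j, hj, hle⟩ := hV2 _ _ hB hB' a hi
  simp only [Finset.mem_sdiff, Finset.mem_insert] at hj
  obtain ⟨hj1 | hj1 | hj1, hj2⟩ := hj
  · subst hj1
    rwa [Finset.erase_insert (by simp [hac, haF]),
      Finset.erase_insert (by simp [hbd, hbF])] at hle
  · subst hj1
    rw [Finset.erase_insert_of_ne hbd, Finset.erase_insert hdF,
      Finset.erase_insert (by simp [hac, haF])] at hle
    rw [h₅, add_top] at hle
    exact absurd (top_le_iff.mp hle) (WithTop.add_ne_top.mpr ⟨h₁, h₂⟩)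
  · exact absurd (by simp [hj1]) hj2

/-- **Lemma (Dress–Wenzel).** Let `ν` be a matroid valuation with support matroid
`M = (E, 𝔅)` (the bases being the `d`-element sets of finite valuation).  Let `F ⊆ E` and
let `a, b, c, d'` be four distinct elements of `E \ F`.  If `F+a+c`, `F+b+d'`, `F+a+d'` and
`F+b+c` all belong to `𝔅` but `F+a+b ∉ 𝔅`, then
`ν(F+a+c) + ν(F+b+d') = ν(F+a+d') + ν(F+b+c)`. -/
theorem dress_wenzel_four_term [DecidableEq E] (d : ℕ) (ν : Finset E → WithTop ℝ)
    (hν : IsValuationR d ν)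
    (F : Finset E) (a b c d' : E)
    (hab : a ≠ b) (hac : a ≠ c) (had : a ≠ d') (hbc : b ≠ c) (hbd : b ≠ d') (hcd : c ≠ d')
    (haF : a ∉ F) (hbF : b ∉ F) (hcF : c ∉ F) (hdF : d' ∉ F)
    (hcard : F.card + 2 = d)
    (h₁ : ν (insert a (insert c F)) ≠ ⊤)
    (h₂ : ν (insert b (insert d' F)) ≠ ⊤)
    (h₃ : ν (insert a (insert d' F)) ≠ ⊤)
    (h₄ : ν (insert b (insert c F)) ≠ ⊤)
    (h₅ : ν (insert a (insert b F)) = ⊤) :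
    ν (insert a (insert c F)) + ν (insert b (insert d' F)) =
      ν (insert a (insert d' F)) + ν (insert b (insert c F)) := by
  have k1 := key hν hab hac had hbc hbd hcd haF hbF hcF hdF hcard h₁ h₂ h₅
  have k2 := key hν hab had hac hbd hbc hcd.symm haF hbF hdF hcF hcard h₃ h₄ h₅
  refine le_antisymm ?_ ?_
  · calc ν (insert a (insert c F)) + ν (insert b (insert d' F))
        = ν (insert b (insert d' F)) + ν (insert a (insert c F)) := add_comm _ _
      _ ≤ ν (insert a (insert d' F)) + ν (insert b (insert c F)) := k2
  · calc ν (insert a (insert d' F)) + ν (insert b (insert c F))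
        = ν (insert b (insert c F)) + ν (insert a (insert d' F)) := add_comm _ _
      _ ≤ ν (insert a (insert c F)) + ν (insert b (insert d' F)) := k1

end FrobFlock
end

section
/- Let M be a matroid of rank d on E, and suppose {i, j} is a circuit of M. If ν and ν' are matroid valuations with support matroid M such that ν(B) = ν'(B) for all B ∈ binom(E,d) with j ∉ B, then ν and ν' are equivalent, i.e. there exists α ∈ ℝ^E with ν(B) = ν'(B) + Σ_{k∈B} α_k for all B ∈ binom(E,d) with ν'(B) < ∞. -/
open Matroid Set

namespace FrobFlock

variable {E : Type*}

/-- The matroid `N` on `E` is algebraic over the field `K`: there is a field extension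
`L` of `K` and a map `φ : E → L` such that `I ⊆ E` is independent in `N` if and only if
the family `(φ(i))_{i∈I}` is algebraically independent over `K`. -/
def AlgebraicOver (K : Type*) [Field K] (N : Matroid E) : Prop :=
  ∃ (L : Type*) (_ : Field L) (_ : Algebra K L) (φ : E → L),
    ∀ I : Set E, N.Indep I ↔ AlgebraicIndependent K (fun i : I => φ i)

/-- The matroid `N` on `E` is linear over the field `K`: there is a `K`-vector space `V`
and a map `ψ : E → V` such that `I ⊆ E` is independent in `N` if and only if the family
`(ψ(i))_{i∈I}` is `K`-linearly independent. -/
def LinearOver (K : Type*) [Field K] (N : Matroid E) : Prop :=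
  ∃ (V : Type*) (_ : AddCommGroup V) (_ : Module K V) (ψ : E → V),
    ∀ I : Set E, N.Indep I ↔ LinearIndependent K (fun i : I => ψ i)

/-- A matroid valuation `ν : binom(E,d) → ℝ ∪ {∞}` whose support matroid is `N`, i.e.
`ν(B) < ∞` exactly when `B` is a basis of `N`, together with the exchange property (V2). -/
def ValuationOf [DecidableEq E] (d : ℕ) (N : Matroid E) (ν : Finset E → WithTop ℝ) : Prop :=
  (∀ B : Finset E, B.card ≠ d → ν B = ⊤) ∧
  (∀ B : Finset E, B.card = d → (ν B ≠ ⊤ ↔ N.IsBase ↑B)) ∧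
  (∀ B B' : Finset E, B.card = d → B'.card = d → ∀ i ∈ B \ B', ∃ j ∈ B' \ B,
      ν (insert j (B.erase i)) + ν (insert i (B'.erase j)) ≤ ν B + ν B')

/-- A real-valued matroid valuation is trivial if there is an `α ∈ ℝ^E` with
`ν(B) = Σ_{i∈B} α_i` for all `B` with `ν(B) < ∞`. -/
def TrivialValR (ν : Finset E → WithTop ℝ) : Prop :=
  ∃ α : E → ℝ, ∀ B : Finset E, ν B ≠ ⊤ → ν B = ((∑ i ∈ B, α i : ℝ) : WithTop ℝ)

/-- The matroid `N` is rigid: every matroid valuation with support matroid `N` is trivial. -/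
def Rigid [DecidableEq E] (N : Matroid E) : Prop :=
  ∀ (d : ℕ) (ν : Finset E → WithTop ℝ), ValuationOf d N ν → TrivialValR ν


/-!
Since `{i, j}` is a circuit and `{i}` is independent, `i` and `j` are parallel, so `B ↦ B - j + i`
maps the bases containing `j` to bases avoiding `j`. Applying (V2) to `B₁` and `B₂ - j + i` at `j`,
the only admissible exchange partner is `i`, whence
`ν(B₁ - j + i) + ν(B₂) ≤ ν(B₁) + ν(B₂ - j + i)` and, by symmetry, equality. Thus `ν(B) - ν(B - j + i)`
is a constant `c` on the bases containing `j`; as `ν` and `ν'` agree on the bases avoiding `j`,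
`α = (c - c') • e_j` works.
-/

theorem _root_.Matroid.ne_of_indep_singleton_of_not_indep_pair {M : Matroid E} {i j : E}
    (hi : M.Indep {i}) (hij : ¬ M.Indep {i, j}) : i ≠ j := by
  rintro rfl
  exact hij (by rwa [pair_eq_singleton])

theorem _root_.Matroid.IsBase.exchange_isBase_of_not_indep_pair {M : Matroid E} {B : Set E}
    {i j : E} (hB : M.IsBase B) (hjB : j ∈ B) (hi : M.Indep {i}) (hij : ¬ M.Indep {i, j}) :
    M.IsBase (insert i (B \ {j})) := by
  have hj_cl : j ∈ M.closure {i} := by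
    rw [hi.mem_closure_iff, pair_comm]
    exact Or.inl ((not_indep_iff (pair_subset (hi.subset_ground rfl)
      (hB.subset_ground hjB))).1 hij)
  refine hB.exchange_base_of_notMem_closure hjB (fun hi_cl => ?_) (hi.subset_ground rfl)
  have hcl : M.closure {i} ⊆ M.closure (B \ {j}) :=
    M.closure_subset_closure_of_subset_closure (singleton_subset_iff.2 hi_cl)
  exact hB.indep.notMem_closure_sdiff_of_mem hjB (hcl hj_cl)

section Valuation

variable [DecidableEq E] {d : ℕ} {N : Matroid E} {ν ν' : Finset E → WithTop ℝ} {B : Finset E}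
  {i j : E}

theorem ValuationOf.card_eq (hν : ValuationOf d N ν) (hB : ν B ≠ ⊤) : B.card = d := by
  by_contra h
  exact hB (hν.1 B h)

theorem ValuationOf.isBase (hν : ValuationOf d N ν) (hB : ν B ≠ ⊤) : N.IsBase B :=
  (hν.2.1 B (hν.card_eq hB)).1 hB

theorem ValuationOf.ne_top_of_ne_top (hν : ValuationOf d N ν) (hν' : ValuationOf d N ν')
    (hB : ν' B ≠ ⊤) : ν B ≠ ⊤ :=
  (hν.2.1 B (hν'.card_eq hB)).2 (hν'.isBase hB)

theorem ValuationOf.eq_top_of_not_indep (hν : ValuationOf d N ν) {X : Set E}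
    (hX : ¬ N.Indep X) (hXB : X ⊆ B) : ν B = ⊤ := by
  by_contra hB
  exact hX ((hν.isBase hB).indep.subset hXB)

theorem ValuationOf.notMem_of_not_indep_pair (hν : ValuationOf d N ν) (hij : ¬ N.Indep {i, j})
    (hB : ν B ≠ ⊤) (hjB : j ∈ B) : i ∉ B := fun hiB =>
  hB (hν.eq_top_of_not_indep hij (by simp [pair_subset_iff, hiB, hjB]))

theorem ValuationOf.ne_top_insert_erase (hν : ValuationOf d N ν) (hi : N.Indep {i})
    (hij : ¬ N.Indep {i, j}) (hB : ν B ≠ ⊤) (hjB : j ∈ B) :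
    ν (insert i (B.erase j)) ≠ ⊤ := by
  have hiB : i ∉ B.erase j := fun hiB =>
    hν.notMem_of_not_indep_pair hij hB hjB (Finset.mem_of_mem_erase hiB)
  refine (hν.2.1 _ ?_).2 ?_
  · rw [Finset.card_insert_of_notMem hiB, Finset.card_erase_add_one hjB, hν.card_eq hB]
  · rw [Finset.coe_insert, Finset.coe_erase]
    exact (hν.isBase hB).exchange_isBase_of_not_indep_pair hjB hi hij

theorem ValuationOf.exchange_add_le (hν : ValuationOf d N ν) (hi : N.Indep {i})
    (hij : ¬ N.Indep {i, j}) {B₁ B₂ : Finset E} (hB₁ : ν B₁ ≠ ⊤) (hB₂ : ν B₂ ≠ ⊤)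
    (hjB₁ : j ∈ B₁) (hjB₂ : j ∈ B₂) :
    ν (insert i (B₁.erase j)) + ν B₂ ≤ ν B₁ + ν (insert i (B₂.erase j)) := by
  have hne := ne_of_indep_singleton_of_not_indep_pair hi hij
  set B₂' := insert i (B₂.erase j)
  have hB₂' : ν B₂' ≠ ⊤ := hν.ne_top_insert_erase hi hij hB₂ hjB₂
  have hjB₂' : j ∉ B₂' := by simp [B₂', hne.symm]
  obtain ⟨k, hk, hle⟩ := hν.2.2 B₁ B₂' (hν.card_eq hB₁) (hν.card_eq hB₂') j
    (Finset.mem_sdiff.2 ⟨hjB₁, hjB₂'⟩)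
  obtain rfl | hki := eq_or_ne k i
  · have hiB₂ : k ∉ B₂.erase j := fun hk' =>
      hν.notMem_of_not_indep_pair hij hB₂ hjB₂ (Finset.mem_of_mem_erase hk')
    rwa [Finset.erase_insert hiB₂, Finset.insert_erase hjB₂] at hle
  · have htop : ν (insert j (B₂'.erase k)) = ⊤ :=
      hν.eq_top_of_not_indep hij (by simp [pair_subset_iff, B₂', hki.symm])
    rw [htop, WithTop.add_top, top_le_iff] at hle
    exact absurd hle (WithTop.add_ne_top.2 ⟨hB₁, hB₂'⟩)

theorem ValuationOf.exists_eq_insert_erase_add (hν : ValuationOf d N ν) (hi : N.Indep {i})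
    (hij : ¬ N.Indep {i, j}) :
    ∃ c : ℝ, ∀ B : Finset E, ν B ≠ ⊤ → j ∈ B → ν B = ν (insert i (B.erase j)) + c := by
  by_cases h : ∀ B, ν B ≠ ⊤ → j ∉ B
  · exact ⟨0, fun B hB hjB => absurd hjB (h B hB)⟩
  push Not at h
  obtain ⟨B₀, hB₀, hjB₀⟩ := h
  have hB₀' := hν.ne_top_insert_erase hi hij hB₀ hjB₀
  obtain ⟨a, ha⟩ := WithTop.ne_top_iff_exists.1 hB₀
  obtain ⟨p, hp⟩ := WithTop.ne_top_iff_exists.1 hB₀'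
  refine ⟨a - p, fun B hB hjB => ?_⟩
  have h₁ := hν.exchange_add_le hi hij hB hB₀ hjB hjB₀
  have h₂ := hν.exchange_add_le hi hij hB₀ hB hjB₀ hjB
  have hB' := hν.ne_top_insert_erase hi hij hB hjB
  rw [← ha, ← hp] at h₁ h₂
  lift ν B to ℝ using hB with b
  lift ν (insert i (B.erase j)) to ℝ using hB' with q
  norm_cast at h₁ h₂ ⊢
  linarith

end Valuation

theorem circuit_pair_valuations_equivalent_general [DecidableEq E]
    (d : ℕ) (N : Matroid E) (i j : E)
    (hdep : ¬ N.Indep {i, j}) (hi : N.Indep {i})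
    (ν ν' : Finset E → WithTop ℝ)
    (hν : ValuationOf d N ν) (hν' : ValuationOf d N ν')
    (hagree : ∀ B : Finset E, j ∉ B → ν B = ν' B) :
    ∃ α : E → ℝ, ∀ B : Finset E, ν' B ≠ ⊤ →
      ν B = ν' B + ((∑ k ∈ B, α k : ℝ) : WithTop ℝ) := by
  obtain ⟨c, hc⟩ := hν.exists_eq_insert_erase_add hi hdep
  obtain ⟨c', hc'⟩ := hν'.exists_eq_insert_erase_add hi hdep
  have hne := ne_of_indep_singleton_of_not_indep_pair hi hdep
  refine ⟨Pi.single j (c - c'), fun B hB => ?_⟩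
  rw [Finset.sum_pi_single']
  by_cases hjB : j ∈ B
  · have hj_swap : j ∉ insert i (B.erase j) := by simp [hne.symm]
    rw [if_pos hjB, hc B (hν.ne_top_of_ne_top hν' hB) hjB, hc' B hB hjB, hagree _ hj_swap,
      add_assoc, ← WithTop.coe_add, add_sub_cancel]
  · rw [if_neg hjB, WithTop.coe_zero, add_zero, hagree B hjB]

/-- **Lemma.** Let `M` be a matroid of rank `d` on `E` and suppose `{i,j}` is a circuit of
`M` (i.e. `{i,j}` is dependent but `{i}` and `{j}` are independent).  If `ν` and `ν'` are
matroid valuations with support matroid `M` that agree on all `B ∈ binom(E,d)` with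
`j ∉ B`, then `ν` and `ν'` are equivalent: there is an `α ∈ ℝ^E` with
`ν(B) = ν'(B) + Σ_{k∈B} α_k` for all `B` with `ν'(B) < ∞`. -/
theorem circuit_pair_valuations_equivalent [Fintype E] [DecidableEq E]
    (d : ℕ) (N : Matroid E) (hNg : N.E = Set.univ) (i j : E) (hij : i ≠ j)
    (hdep : ¬ N.Indep {i, j}) (hi : N.Indep {i}) (hj : N.Indep {j})
    (ν ν' : Finset E → WithTop ℝ)
    (hν : ValuationOf d N ν) (hν' : ValuationOf d N ν')
    (hagree : ∀ B : Finset E, j ∉ B → ν B = ν' B) :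
    ∃ α : E → ℝ, ∀ B : Finset E, ν' B ≠ ⊤ →
      ν B = ν' B + ((∑ k ∈ B, α k : ℝ) : WithTop ℝ) :=
  circuit_pair_valuations_equivalent_general d N i j hdep hi ν ν' hν hν' hagree

end FrobFlock
end
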